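/- arXiv:1006.4400 — 2 statements merged into one kernel-verified Lean document; each statement's English description precedes it below -/
import Mathlib

section
/- Let N ≥ 3, δ = 1, K = 1 (so k_n = ⌊n log n⌋), and let the connection rates satisfy c_{k_n} = C + a N log n with C ≥ 0, a > 0 and c_{k_n} ≤ c_j ≤ c_{k_{n+1}} whenever k_n < j < k_{n+1}. If a > 1, then pre-percolation occurs in G_N. -/
open MeasureTheory ProbabilityTheory Filter

/-- The hierarchical group of order `N`: sequences with values in `{0, ..., N-1}`
(encoded as `ZMod N`), all but finitely many entries zero, with componentwise
addition mod `N`. -/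
abbrev HierGroup (N : ℕ) := ℕ →₀ ZMod N

/-- The hierarchical distance: `0` if `x = y`, and otherwise the largest index
(counted starting from `1`) where `x` and `y` differ. -/
noncomputable def hdist {N : ℕ} (x y : HierGroup N) : ℕ :=
  (x - y).support.sup fun i => i + 1

lemma hdist_comm {N : ℕ} (x y : HierGroup N) : hdist x y = hdist y x := by
  unfold hdist
  rw [← neg_sub y x, Finsupp.support_neg]

/-- The random graph determined by an edge configuration `ω`:
`x` and `y` are adjacent iff they are distinct and the edge `s(x,y)` is open. -/
def graphOf {V : Type*} {Ω : Type*} (E : Sym2 V → Ω → Bool) (ω : Ω) : SimpleGraph V where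
  Adj x y := x ≠ y ∧ E s(x, y) ω = true
  symm := by
    constructor
    intro x y h
    refine ⟨h.1.symm, ?_⟩
    rw [Sym2.eq_swap]
    exact h.2
  loopless := ⟨fun x h => h.1 rfl⟩

/-- `x` lies in an infinite cluster (connected component) of `G`. -/
def InInfiniteCluster {V : Type*} (G : SimpleGraph V) (x : V) : Prop :=
  {y | G.Reachable x y}.Infinite

/-- `G` has exactly one infinite connected component. -/
def UniqueInfiniteCluster {V : Type*} (G : SimpleGraph V) : Prop :=
  ∃! S : Set V, (∃ x, S = {y | G.Reachable x y}) ∧ S.Infinite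

/-- The edge probabilities of the hierarchical random graph `G_N`: two distinct
points at hierarchical distance `k` are joined with probability
`min (c k / N ^ (k * (1 + δ))) 1`. -/
def EdgeProbOK (N : ℕ) (δ : ℝ) (c : ℕ → ℝ) {Ω : Type*} [MeasurableSpace Ω]
    (μ : Measure Ω) (E : Sym2 (HierGroup N) → Ω → Bool) : Prop :=
  ∀ x y : HierGroup N, x ≠ y →
    μ {ω | E s(x, y) ω = true} =
      ENNReal.ofReal (min (c (hdist x y) / (N : ℝ) ^ ((hdist x y : ℝ) * (1 + δ))) 1)

/-- The `k`-ball containing `0` in the hierarchical group. -/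
def hball (N : ℕ) (k : ℕ) : Set (HierGroup N) := {y | hdist 0 y ≤ k}

/-- The `(j, l]`-annulus around `0` in the hierarchical group. -/
def hannulus (N : ℕ) (j l : ℕ) : Set (HierGroup N) :=
  {y | j < hdist 0 y ∧ hdist 0 y ≤ l}

/-- The restriction of a graph to a set `S` of vertices: only edges with both
endpoints in `S` are kept. -/
def restrictTo {V : Type*} (G : SimpleGraph V) (S : Set V) : SimpleGraph V where
  Adj a b := G.Adj a b ∧ a ∈ S ∧ b ∈ S
  symm := ⟨fun a b h => ⟨h.1.symm, h.2.2, h.2.1⟩⟩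
  loopless := ⟨fun a h => G.irrefl h.1⟩

/-- The cluster of `x` inside the `k`-ball `B_k` containing `0`, using only
edges between points of `B_k`. -/
def clusterIn (N : ℕ) (G : SimpleGraph (HierGroup N)) (k : ℕ) (x : HierGroup N) :
    Set (HierGroup N) :=
  {y | (restrictTo G (hball N k)).Reachable x y}

/-- `S` is a largest cluster of the ball `B_k` containing `0` (in the graph `G`
restricted to `B_k`). -/
def IsLargestCluster (N : ℕ) (G : SimpleGraph (HierGroup N)) (k : ℕ)
    (S : Set (HierGroup N)) : Prop :=
  (∃ x ∈ hball N k, S = clusterIn N G k x) ∧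
    ∀ x ∈ hball N k, (clusterIn N G k x).ncard ≤ S.ncard

/-- The hierarchical scales `k_n = ⌊K n log n⌋`. -/
noncomputable def kseq (K : ℝ) (n : ℕ) : ℕ := ⌊K * n * Real.log n⌋₊

open Topology

/-!
Borel–Cantelli. The edges between the annuli `(k_n, k_{n+1}]` and `(k_{n+1}, k_{n+2}]` are
independent; for `x` in the first and `y` in the second the ultrametric inequality gives
`d(x, y) = d(0, y)`, and the rates on `(k_{n+1}, k_{n+2}]` are at least `c_{k_{n+1}}`, so the
pair is open with probability at least `min (c_{k_{n+1}} N^{-2 d(0, y)}) 1`. Summing over all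
pairs, the expected number of such edges is at least
`c_{k_{n+1}} / N · (1 - N^{-(k_{n+1} - k_n)}) (1 - N^{-(k_{n+2} - k_{n+1})})`, which exceeds
`b log n` for any `b < a` once `n` is large, because `c_{k_{n+1}} ≥ a N log n` and the gaps
`k_{n+1} - k_n ≥ log n` tend to infinity. Hence no such edge exists with probability at most
`n^{-b}`, which is summable for `1 < b < a`.
-/

lemma one_sub_min_one_le_exp_neg (p : ℝ) : 1 - min p 1 ≤ Real.exp (-p) := by
  rcases le_total p 1 with hp | hp
  · rw [min_eq_left hp]
    linarith [Real.add_one_le_exp (-p)]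
  · rw [min_eq_right hp, sub_self]
    exact (Real.exp_pos _).le

section Independent

variable {Ω ι κ : Type*} [MeasurableSpace Ω] {μ : Measure Ω} [IsProbabilityMeasure μ]

lemma measure_eq_false_le_exp_neg {E : Ω → Bool} (hE : Measurable E) {p : ℝ}
    (hp : min p 1 ≤ μ.real {ω | E ω = true}) :
    μ {ω | E ω = false} ≤ ENNReal.ofReal (Real.exp (-p)) := by
  have hcompl : {ω | E ω = false} = {ω | E ω = true}ᶜ := by
    ext ω
    simp
  rw [← ofReal_measureReal, hcompl,
    probReal_compl_eq_one_sub (s := {ω | E ω = true}) (hE (measurableSet_singleton _))]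
  exact ENNReal.ofReal_le_ofReal ((sub_le_sub_left hp 1).trans (one_sub_min_one_le_exp_neg p))

lemma measure_forall_eq_false_le_exp_neg_sum {E : ι → Ω → Bool} (hE : ∀ i, Measurable (E i))
    (hind : iIndepFun E μ) {s : Finset κ} {e : κ → ι} (he : Set.InjOn e s) {p : κ → ℝ}
    (hp : ∀ k ∈ s, min (p k) 1 ≤ μ.real {ω | E (e k) ω = true}) :
    μ {ω | ∀ k ∈ s, E (e k) ω = false} ≤ ENNReal.ofReal (Real.exp (-∑ k ∈ s, p k)) := by
  classical
  have hset : {ω | ∀ k ∈ s, E (e k) ω = false} = ⋂ i ∈ s.image e, {ω | E i ω = false} := by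
    ext ω
    simp
  rw [hset]
  refine (hind.meas_biInter (s := fun i => {ω | E i ω = false})
    fun i _ => ⟨{false}, measurableSet_singleton _, rfl⟩).trans_le ?_
  rw [Finset.prod_image fun k hk l hl h => he hk hl h, ← Finset.sum_neg_distrib, Real.exp_sum,
    ENNReal.ofReal_prod_of_nonneg fun k _ => (Real.exp_pos _).le]
  exact Finset.prod_le_prod' fun k hk => measure_eq_false_le_exp_neg (hE _) (hp k hk)

lemma measure_no_edge_between_le {V : Type*} {E : Sym2 V → Ω → Bool}
    (hE : ∀ e, Measurable (E e)) (hind : iIndepFun E μ) {A B : Finset V} (hAB : Disjoint A B)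
    {p : V → V → ℝ} (hp : ∀ x ∈ A, ∀ y ∈ B, min (p x y) 1 ≤ μ.real {ω | E s(x, y) ω = true}) :
    μ {ω | ¬ ∃ x ∈ A, ∃ y ∈ B, (graphOf E ω).Adj x y} ≤
      ENNReal.ofReal (Real.exp (-∑ x ∈ A, ∑ y ∈ B, p x y)) := by
  have hinj : Set.InjOn (fun q : V × V => s(q.1, q.2)) (A ×ˢ B : Finset (V × V)) := by
    rintro ⟨x, y⟩ hxy ⟨x', y'⟩ hxy' h
    simp only [Finset.coe_product, Set.mem_prod, Finset.mem_coe] at hxy hxy'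
    rcases Sym2.eq_iff.mp h with ⟨rfl, rfl⟩ | ⟨rfl, -⟩
    · rfl
    · exact (Finset.disjoint_left.mp hAB hxy.1 hxy'.2).elim
  rw [← Finset.sum_product']
  refine (measure_mono fun ω hω q hq => ?_).trans
    (measure_forall_eq_false_le_exp_neg_sum hE hind hinj fun q hq => ?_)
  · rw [Finset.mem_product] at hq
    have hne : q.1 ≠ q.2 := fun h => Finset.disjoint_left.mp hAB hq.1 (h ▸ hq.2)
    by_contra hopen
    exact hω ⟨q.1, hq.1, q.2, hq.2, hne, by simpa using hopen⟩
  · rw [Finset.mem_product] at hq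
    exact hp _ hq.1 _ hq.2

end Independent

lemma measure_setOf_eventually_mem_eq_one {Ω : Type*} [MeasurableSpace Ω] {μ : Measure Ω}
    [IsProbabilityMeasure μ] {s : ℕ → Set Ω} {b : ℝ} (hb : 1 < b)
    (h : ∀ᶠ n in atTop, μ (s n)ᶜ ≤ ENNReal.ofReal ((n : ℝ) ^ (-b))) :
    μ {ω | ∃ n₀, ∀ n, n₀ ≤ n → ω ∈ s n} = 1 := by
  have hsum : Summable fun n => μ.real (s n)ᶜ :=
    (Real.summable_nat_rpow.mpr (by linarith : -b < -1)).of_norm_bounded_eventually_nat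
      (h.mono fun n hn => by
        rw [Real.norm_of_nonneg measureReal_nonneg]
        exact ENNReal.toReal_le_of_le_ofReal (by positivity) hn)
  have htsum : ∑' n, μ (s n)ᶜ ≠ ⊤ := by
    rw [tsum_congr fun n => (ofReal_measureReal (μ := μ) (s := (s n)ᶜ)).symm,
      ← ENNReal.ofReal_tsum_of_nonneg (fun n => measureReal_nonneg) hsum]
    exact ENNReal.ofReal_ne_top
  have hae : ∀ᵐ ω ∂μ, ω ∈ {ω | ∃ n₀, ∀ n, n₀ ≤ n → ω ∈ s n} :=
    (ae_eventually_notMem htsum).mono fun ω hω => by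
      simpa using eventually_atTop.mp hω
  exact (measure_congr (ae_eq_univ.mpr hae)).trans measure_univ

section Ultrametric

variable {N : ℕ}

lemma hdist_le_max (x y z : HierGroup N) : hdist x z ≤ max (hdist x y) (hdist y z) := by
  unfold hdist
  rw [← sub_add_sub_cancel x y z, ← Finset.sup_union]
  exact Finset.sup_mono Finsupp.support_add

lemma hdist_zero_left (y : HierGroup N) : hdist 0 y = y.support.sup (· + 1) := by
  rw [hdist, zero_sub, Finsupp.support_neg]

lemma hdist_zero_left_le_iff {y : HierGroup N} {m : ℕ} :
    hdist 0 y ≤ m ↔ ∀ i ∈ y.support, i < m := by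
  simp only [hdist_zero_left, Finset.sup_le_iff, Nat.succ_le_iff]

lemma hdist_eq_of_hdist_zero_lt {x y : HierGroup N} (h : hdist 0 x < hdist 0 y) :
    hdist x y = hdist 0 y := by
  have h₁ := hdist_le_max x 0 y
  have h₂ := hdist_le_max 0 x y
  rw [hdist_comm x 0] at h₁
  omega

end Ultrametric

section Counting

variable {N : ℕ} [NeZero N]

noncomputable def ballFinset (N m : ℕ) [NeZero N] : Finset (HierGroup N) :=
  (Finset.range m).finsupp fun _ => Finset.univ

lemma mem_ballFinset {m : ℕ} {y : HierGroup N} : y ∈ ballFinset N m ↔ hdist 0 y ≤ m := by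
  simp [ballFinset, Finset.mem_finsupp_iff, hdist_zero_left_le_iff, Finset.subset_iff]

lemma card_ballFinset (m : ℕ) : (ballFinset N m).card = N ^ m := by
  simp [ballFinset, Finset.card_finsupp]

noncomputable def annulusFinset (N j l : ℕ) [NeZero N] : Finset (HierGroup N) :=
  ballFinset N l \ ballFinset N j

lemma mem_annulusFinset {j l : ℕ} {y : HierGroup N} :
    y ∈ annulusFinset N j l ↔ j < hdist 0 y ∧ hdist 0 y ≤ l := by
  rw [annulusFinset, Finset.mem_sdiff, mem_ballFinset, mem_ballFinset, not_le, and_comm]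

lemma coe_annulusFinset (j l : ℕ) :
    (annulusFinset N j l : Set (HierGroup N)) = hannulus N j l := by
  ext y
  exact mem_annulusFinset

lemma card_annulusFinset {j l : ℕ} (h : j ≤ l) :
    ((annulusFinset N j l).card : ℝ) = (N : ℝ) ^ l - (N : ℝ) ^ j := by
  have hsub : ballFinset N j ⊆ ballFinset N l := fun y hy => by
    rw [mem_ballFinset] at hy ⊢
    omega
  rw [annulusFinset, Finset.card_sdiff_of_subset hsub, card_ballFinset, card_ballFinset,
    Nat.cast_sub (Nat.pow_le_pow_right (Nat.pos_of_neZero N) h), Nat.cast_pow, Nat.cast_pow]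

lemma sum_annulusFinset_one_div_pow (l h : ℕ) :
    ∑ y ∈ annulusFinset N l (l + h), 1 / (N : ℝ) ^ (2 * hdist 0 y) =
      1 / (N : ℝ) ^ (l + 1) - 1 / (N : ℝ) ^ (l + h + 1) := by
  induction h with
  | zero =>
    rw [show annulusFinset N l (l + 0) = ∅ by ext; simp [mem_annulusFinset]]
    simp
  | succ h ih =>
    have hsplit : annulusFinset N l (l + (h + 1)) =
        annulusFinset N l (l + h) ∪ annulusFinset N (l + h) (l + h + 1) := by
      ext y
      simp only [mem_annulusFinset, Finset.mem_union]
      omega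
    have hdisj : Disjoint (annulusFinset N l (l + h)) (annulusFinset N (l + h) (l + h + 1)) :=
      Finset.disjoint_left.mpr fun y hy hy' => by
        rw [mem_annulusFinset] at hy hy'
        omega
    have hsphere : ∀ y ∈ annulusFinset N (l + h) (l + h + 1),
        1 / (N : ℝ) ^ (2 * hdist 0 y) = 1 / (N : ℝ) ^ (2 * (l + h + 1)) := fun y hy => by
      rw [mem_annulusFinset] at hy
      rw [show hdist 0 y = l + h + 1 by omega]
    have hN : (N : ℝ) ≠ 0 := NeZero.ne _
    rw [hsplit, Finset.sum_union hdisj, ih, Finset.sum_congr rfl hsphere, Finset.sum_const,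
      nsmul_eq_mul, card_annulusFinset (by omega)]
    field_simp
    ring

end Counting

section Annuli

variable {N : ℕ} {Ω : Type*} [MeasurableSpace Ω] {μ : Measure Ω} {c : ℕ → ℝ}
  {E : Sym2 (HierGroup N) → Ω → Bool}

lemma EdgeProbOK.min_le_measureReal (hprob : EdgeProbOK N 1 c μ E) {x y : HierGroup N}
    (hxy : x ≠ y) :
    min (c (hdist x y) / (N : ℝ) ^ (2 * hdist x y)) 1 ≤ μ.real {ω | E s(x, y) ω = true} := by
  rw [measureReal_def, hprob x y hxy, ENNReal.toReal_ofReal', ← Real.rpow_natCast]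
  push_cast
  rw [mul_comm (2 : ℝ), one_add_one_eq_two]
  exact le_max_left _ _

variable [NeZero N] [IsProbabilityMeasure μ]

lemma measure_no_edge_between_annuli_le (hE : ∀ e, Measurable (E e)) (hind : iIndepFun E μ)
    (hprob : EdgeProbOK N 1 c μ E) {j l m : ℕ} (hjl : j ≤ l) (hlm : l ≤ m) {c₀ : ℝ}
    (hc₀ : ∀ d, l < d → d ≤ m → c₀ ≤ c d) :
    μ {ω | ¬ ∃ x ∈ hannulus N j l, ∃ y ∈ hannulus N l m, (graphOf E ω).Adj x y} ≤
      ENNReal.ofReal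
        (Real.exp (-(c₀ / N * (1 - 1 / (N : ℝ) ^ (l - j)) * (1 - 1 / (N : ℝ) ^ (m - l))))) := by
  obtain ⟨g, rfl⟩ := Nat.exists_eq_add_of_le hjl
  obtain ⟨h, rfl⟩ := Nat.exists_eq_add_of_le hlm
  set A := annulusFinset N j (j + g)
  set B := annulusFinset N (j + g) (j + g + h)
  have hAB : Disjoint A B := Finset.disjoint_left.mpr fun y hA hB => by
    rw [mem_annulusFinset] at hA hB
    omega
  have hsum : ∑ x ∈ A, ∑ y ∈ B, c₀ * (1 / (N : ℝ) ^ (2 * hdist 0 y)) =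
      c₀ / N * (1 - 1 / (N : ℝ) ^ (j + g - j)) * (1 - 1 / (N : ℝ) ^ (j + g + h - (j + g))) := by
    have hN : (N : ℝ) ≠ 0 := NeZero.ne _
    rw [← Finset.mul_sum, sum_annulusFinset_one_div_pow, Finset.sum_const, nsmul_eq_mul,
      card_annulusFinset (by omega), Nat.add_sub_cancel_left, Nat.add_sub_cancel_left]
    field_simp
    ring
  rw [← coe_annulusFinset, ← coe_annulusFinset, ← hsum]
  refine measure_no_edge_between_le hE hind hAB fun x hx y hy => ?_
  rw [mem_annulusFinset] at hx hy
  have hdist_eq : hdist x y = hdist 0 y := hdist_eq_of_hdist_zero_lt (by omega)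
  have hxy : x ≠ y := fun h => by subst h; omega
  refine le_trans ?_ (hprob.min_le_measureReal hxy)
  rw [hdist_eq, mul_one_div]
  gcongr
  exact hc₀ _ hy.1 hy.2

end Annuli

lemma kseq_one_add_le_kseq_one_succ {n L : ℕ} (hn : 0 < n) (hL : (L : ℝ) ≤ Real.log n) :
    kseq 1 n + L ≤ kseq 1 (n + 1) := by
  have hn' : (0 : ℝ) < n := Nat.cast_pos.mpr hn
  have hfloor : (kseq 1 n : ℝ) ≤ n * Real.log n := by
    rw [kseq, one_mul]
    exact Nat.floor_le (mul_nonneg hn'.le (Real.log_nonneg (Nat.one_le_cast.mpr hn)))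
  have hlog : Real.log n ≤ Real.log (n + 1) := Real.log_le_log hn' (by linarith)
  refine Nat.le_floor ?_
  push_cast
  nlinarith

lemma le_rate_of_mem_Ioc_kseq {N : ℕ} {C a : ℝ} (ha : 0 ≤ a) {c : ℕ → ℝ}
    (hck : ∀ n : ℕ, 1 ≤ n → c (kseq 1 n) = C + a * N * Real.log n)
    (hmono : ∀ n : ℕ, 1 ≤ n → ∀ j : ℕ, kseq 1 n < j → j < kseq 1 (n + 1) →
      c (kseq 1 n) ≤ c j)
    {n d : ℕ} (hn : 1 ≤ n) (hd : d ∈ Set.Ioc (kseq 1 n) (kseq 1 (n + 1))) :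
    c (kseq 1 n) ≤ c d := by
  rcases hd.2.lt_or_eq with hlt | rfl
  · exact hmono n hn d hd.1 hlt
  · rw [hck n hn, hck (n + 1) (by omega)]
    gcongr
    omega

lemma one_sub_half_pow_le_one_sub_inv_pow {N L g : ℕ} (hN : 2 ≤ N) (hLg : L ≤ g) :
    1 - (1 / 2 : ℝ) ^ L ≤ 1 - 1 / (N : ℝ) ^ g := by
  have hN' : (2 : ℝ) ≤ N := by exact_mod_cast hN
  calc 1 - (1 / 2 : ℝ) ^ L ≤ 1 - (1 / 2) ^ g :=
        sub_le_sub_left (pow_le_pow_of_le_one (by norm_num) (by norm_num) hLg) 1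
    _ ≤ 1 - 1 / (N : ℝ) ^ g := by
      rw [one_div_pow]
      gcongr

lemma measure_no_edge_between_kseq_annuli_le {N : ℕ} (hN : 2 ≤ N) {C a : ℝ} (hC : 0 ≤ C)
    (ha : 0 ≤ a) {c : ℕ → ℝ}
    (hck : ∀ n : ℕ, 1 ≤ n → c (kseq 1 n) = C + a * N * Real.log n)
    (hmono : ∀ n : ℕ, 1 ≤ n → ∀ j : ℕ, kseq 1 n < j → j < kseq 1 (n + 1) →
      c (kseq 1 n) ≤ c j)
    {Ω : Type*} [MeasurableSpace Ω] {μ : Measure Ω} [IsProbabilityMeasure μ]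
    {E : Sym2 (HierGroup N) → Ω → Bool} (hE : ∀ e, Measurable (E e)) (hind : iIndepFun E μ)
    (hprob : EdgeProbOK N 1 c μ E) {n L : ℕ} (hn : 1 ≤ n) (hL : (L : ℝ) ≤ Real.log n) :
    μ {ω | ¬ ∃ x ∈ hannulus N (kseq 1 n) (kseq 1 (n + 1)),
        ∃ y ∈ hannulus N (kseq 1 (n + 1)) (kseq 1 (n + 2)), (graphOf E ω).Adj x y} ≤
      ENNReal.ofReal ((n : ℝ) ^ (-(a * (1 - (1 / 2 : ℝ) ^ L) ^ 2))) := by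
  have : NeZero N := ⟨by omega⟩
  have hn' : (0 : ℝ) < n := Nat.cast_pos.mpr hn
  have hlog_succ : Real.log n ≤ Real.log (n + 1 : ℕ) := Real.log_le_log hn' (by simp)
  have hgap₁ : kseq 1 n + L ≤ kseq 1 (n + 1) := kseq_one_add_le_kseq_one_succ hn hL
  have hgap₂ : kseq 1 (n + 1) + L ≤ kseq 1 (n + 2) :=
    kseq_one_add_le_kseq_one_succ (Nat.succ_pos n) (hL.trans hlog_succ)
  refine (measure_no_edge_between_annuli_le hE hind hprob (m := kseq 1 (n + 2)) (by omega)
    (by omega) fun d hd₁ hd₂ =>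
      le_rate_of_mem_Ioc_kseq ha hck hmono (by omega) ⟨hd₁, hd₂⟩).trans ?_
  have hrate : a * Real.log n ≤ c (kseq 1 (n + 1)) / N := by
    rw [hck (n + 1) (by omega), le_div_iff₀ (by positivity)]
    nlinarith [mul_le_mul_of_nonneg_left hlog_succ (by positivity : 0 ≤ a * N)]
  have hfactor₁ := one_sub_half_pow_le_one_sub_inv_pow (N := N) (by omega)
    (by omega : L ≤ kseq 1 (n + 1) - kseq 1 n)
  have hfactor₂ := one_sub_half_pow_le_one_sub_inv_pow (N := N) (by omega)
    (by omega : L ≤ kseq 1 (n + 2) - kseq 1 (n + 1))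
  have hhalf : 0 ≤ 1 - (1 / 2 : ℝ) ^ L :=
    sub_nonneg.mpr (pow_le_one₀ (by norm_num) (by norm_num))
  have hlog_nonneg : 0 ≤ a * Real.log n := mul_nonneg ha (Real.log_natCast_nonneg n)
  rw [Real.rpow_def_of_pos hn', mul_neg]
  gcongr ENNReal.ofReal (Real.exp (-?_))
  calc Real.log n * (a * (1 - (1 / 2) ^ L) ^ 2)
      = a * Real.log n * (1 - (1 / 2) ^ L) * (1 - (1 / 2) ^ L) := by ring
    _ ≤ _ :=
      mul_le_mul (mul_le_mul hrate hfactor₁ hhalf (hlog_nonneg.trans hrate)) hfactor₂ hhalf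
        (mul_nonneg (hlog_nonneg.trans hrate) (hhalf.trans hfactor₁))

/-- Critical case `δ = 1`, `N ≥ 3`, `K = 1` (so `k_n = ⌊n log n⌋`),
`c_{k_n} = C + a N log n`, interpolation in between: if `a > 1`,
pre-percolation occurs: with probability `1` there is `n₀` such that for every
`n ≥ n₀` there is an edge between the `(k_n, k_{n+1}]`-annulus and the
`(k_{n+1}, k_{n+2}]`-annulus around `0`. -/
theorem critical_pre_percolation_of_one_lt_a
    (N : ℕ) (hN : 3 ≤ N) (C a : ℝ) (hC : 0 ≤ C) (ha : 0 < a) (ha1 : 1 < a)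
    (c : ℕ → ℝ)
    (hck : ∀ n : ℕ, 1 ≤ n → c (kseq 1 n) = C + a * N * Real.log n)
    (hmono : ∀ n : ℕ, 1 ≤ n → ∀ j : ℕ, kseq 1 n < j → j < kseq 1 (n + 1) →
      c (kseq 1 n) ≤ c j ∧ c j ≤ c (kseq 1 (n + 1)))
    (Ω : Type) [MeasurableSpace Ω] (μ : Measure Ω) [IsProbabilityMeasure μ]
    (E : Sym2 (HierGroup N) → Ω → Bool)
    (hE : ∀ e, Measurable (E e))
    (hind : iIndepFun E μ)
    (hprob : EdgeProbOK N 1 c μ E) :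
    μ {ω | ∃ n0 : ℕ, ∀ n : ℕ, n0 ≤ n →
        ∃ x ∈ hannulus N (kseq 1 n) (kseq 1 (n + 1)),
        ∃ y ∈ hannulus N (kseq 1 (n + 1)) (kseq 1 (n + 2)),
          (graphOf E ω).Adj x y} = 1 := by
  have hlimit :
      Tendsto (fun L : ℕ => a * (1 - (1 / 2 : ℝ) ^ L) ^ 2) atTop (𝓝 (a * (1 - 0) ^ 2)) :=
    (((tendsto_pow_atTop_nhds_zero_of_lt_one (by norm_num) (by norm_num)).const_sub 1).pow
      2).const_mul a
  obtain ⟨L, hb⟩ := (hlimit.eventually (lt_mem_nhds (by simpa using ha1))).exists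
  refine measure_setOf_eventually_mem_eq_one hb ?_
  filter_upwards [eventually_ge_atTop 1,
    (Real.tendsto_log_atTop.comp tendsto_natCast_atTop_atTop).eventually_ge_atTop (L : ℝ)]
    with n hn hlog
  exact measure_no_edge_between_kseq_annuli_le (by omega) hC ha.le hck
    (fun n hn j hj₁ hj₂ => (hmono n hn j hj₁ hj₂).1) hE hind hprob hn hlog
end

section
/- For every a > 1 there exist constants M > 0 and L > 0 such that for all n ≥ 2, the Erdős–Rényi random graph G(n, a log n / n) satisfies P(G(n, a log n / n) is not connected) ≤ M [ (log n)^{13} n^{1−a} + n^{−1} + exp(−L (log n)^{13} n²) ]. -/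
open MeasureTheory ProbabilityTheory Filter

/-!
If `G(n, p)` is disconnected, the component of some vertex or its complement is a vertex set `S`
with `1 ≤ |S| ≤ n / 2` and no edge leaving it, so a union bound gives
`P(not connected) ≤ ∑_{1 ≤ k ≤ n/2} C(n, k) (1 - p) ^ (k (n - k))`.
Since `C(n, k) ≤ (e n / k) ^ k` and `(1 - p) ^ (n - k) ≤ exp (-p (n - k))`, the `k`-th term is at
most `b ^ k` with `log b = 1 + log n - p n + (p k - log k)`. The bracket is convex in `k`, so on
`[1, n / 2]` it is largest at an endpoint; for `p = a log n / n` both endpoints give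
`b ≤ e² (n ^ (1 - a) + n⁻¹)`. Once this is `≤ 1 / 2` the geometric series is at most `2 b`, and the
finitely many small `n` are absorbed into the constant through the `n⁻¹` term.
-/

open Real Finset
open scoped ENNReal

/-- With `x = 1 - p`, the expected number of vertex sets `S` of `G(n, p)` with
`1 ≤ |S| ≤ n / 2` and no edge between `S` and its complement. -/
def cutSum {R : Type*} [CommSemiring R] (n : ℕ) (x : R) : R :=
  ∑ k ∈ Icc 1 (n / 2), (n.choose k : R) * x ^ (k * (n - k))

theorem ENNReal.ofReal_cutSum (n : ℕ) {p : ℝ} (hp0 : 0 ≤ p) (hp1 : p ≤ 1) :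
    ENNReal.ofReal (cutSum n (1 - p)) = cutSum n (1 - ENNReal.ofReal p) := by
  have h1p : 0 ≤ 1 - p := by linarith
  rw [cutSum, ENNReal.ofReal_sum_of_nonneg fun k _ => by positivity]
  refine sum_congr rfl fun k _ => ?_
  rw [ENNReal.ofReal_mul (by positivity), ENNReal.ofReal_pow h1p, ENNReal.ofReal_sub _ hp0,
    ENNReal.ofReal_one, ENNReal.ofReal_natCast]

theorem SimpleGraph.exists_card_le_half_not_adj_of_not_preconnected {V : Type*} [Fintype V]
    {G : SimpleGraph V} (hG : ¬ G.Preconnected) :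
    ∃ S : Finset V, #S ∈ Icc 1 (Fintype.card V / 2) ∧ ∀ i ∈ S, ∀ j ∉ S, ¬ G.Adj i j := by
  classical
  obtain ⟨x, y, hxy⟩ : ∃ x y, ¬ G.Reachable x y := by simpa [SimpleGraph.Preconnected] using hG
  set C := univ.filter (G.Reachable x)
  have hC : ∀ i ∈ C, ∀ j ∉ C, ¬ G.Adj i j := fun i hi j hj hij =>
    hj (mem_filter.2 ⟨mem_univ _, (mem_filter.1 hi).2.trans hij.reachable⟩)
  have hxC : x ∈ C := by simp [C]
  have hyC : y ∉ C := by simpa [C] using hxy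
  have hcard : #C + #Cᶜ = Fintype.card V := card_add_card_compl C
  rcases le_or_gt (2 * #C) (Fintype.card V) with hle | hgt
  · exact ⟨C, mem_Icc.2 ⟨card_pos.2 ⟨x, hxC⟩, by omega⟩, hC⟩
  · refine ⟨Cᶜ, mem_Icc.2 ⟨card_pos.2 ⟨y, mem_compl.2 hyC⟩, by omega⟩, fun i hi j hj hij => ?_⟩
    exact hC j (by simpa using hj) i (mem_compl.1 hi) hij.symm

section RandomGraph

variable {V Ω : Type*} [Fintype V] [MeasurableSpace Ω] {μ : Measure Ω} [IsProbabilityMeasure μ]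
  {E : Sym2 V → Ω → Bool} {q : ℝ≥0∞}

theorem measure_forall_edge_eq_false (hE : ∀ e, Measurable (E e)) (hind : iIndepFun E μ)
    (hq : ∀ i j, i ≠ j → μ {ω | E s(i, j) ω = true} = q) (S : Finset V) :
    μ {ω | ∀ i ∈ S, ∀ j ∉ S, E s(i, j) ω = false} = (1 - q) ^ (#S * (Fintype.card V - #S)) := by
  classical
  set F := (S ×ˢ Sᶜ).image fun ij => s(ij.1, ij.2)
  have hF : #F = #S * (Fintype.card V - #S) := by
    rw [card_image_of_injOn, card_product, card_compl]
    rintro ⟨i, j⟩ hij ⟨i', j'⟩ hij' h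
    simp only [coe_product, Set.mem_prod, mem_coe, mem_compl] at hij hij'
    rcases Sym2.eq_iff.1 h with ⟨rfl, rfl⟩ | ⟨rfl, rfl⟩
    · rfl
    · exact absurd hij.1 hij'.2
  have hset : {ω | ∀ i ∈ S, ∀ j ∉ S, E s(i, j) ω = false} = ⋂ e ∈ F, E e ⁻¹' {false} := by
    ext ω
    simp only [F, Set.mem_ofPred_eq, Set.mem_iInter, mem_image, mem_product, mem_compl,
      Set.mem_preimage, Set.mem_singleton_iff]
    exact ⟨fun h _ ⟨⟨i, j⟩, ⟨hi, hj⟩, hij⟩ => hij ▸ h i hi j hj,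
      fun h i hi j hj => h _ ⟨(i, j), ⟨hi, hj⟩, rfl⟩⟩
  have hfalse : ∀ e ∈ F, μ (E e ⁻¹' {false}) = 1 - q := by
    simp only [F, mem_image, mem_product, mem_compl]
    rintro _ ⟨⟨i, j⟩, ⟨hi, hj⟩, rfl⟩
    have hcompl : E s(i, j) ⁻¹' {false} = (E s(i, j) ⁻¹' {true})ᶜ := by ext; simp
    rw [hcompl, prob_compl_eq_one_sub (hE _ (measurableSet_singleton true)),
      ← hq i j (ne_of_mem_of_not_mem hi hj)]
    rfl
  rw [hset, hind.meas_biInter fun e _ => ⟨{false}, measurableSet_singleton false, rfl⟩,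
    prod_congr rfl hfalse, prod_const, hF]

theorem measure_not_connected_le_cutSum [Nonempty V] (hE : ∀ e, Measurable (E e))
    (hind : iIndepFun E μ) (hq : ∀ i j, i ≠ j → μ {ω | E s(i, j) ω = true} = q) :
    μ {ω | ¬ (graphOf E ω).Connected} ≤ cutSum (Fintype.card V) (1 - q) := by
  classical
  set n := Fintype.card V
  have hsub : {ω | ¬ (graphOf E ω).Connected} ⊆
      ⋃ k ∈ Icc 1 (n / 2), ⋃ S ∈ powersetCard k (univ : Finset V),
        {ω | ∀ i ∈ S, ∀ j ∉ S, E s(i, j) ω = false} := by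
    intro ω hω
    obtain ⟨S, hS, hcut⟩ := SimpleGraph.exists_card_le_half_not_adj_of_not_preconnected
      fun h => hω (SimpleGraph.connected_iff _ |>.2 ⟨h, inferInstance⟩)
    simp only [Set.mem_iUnion, mem_powersetCard_univ]
    refine ⟨#S, hS, S, rfl, fun i hi j hj => ?_⟩
    simpa using fun h => hcut i hi j hj ⟨ne_of_mem_of_not_mem hi hj, h⟩
  calc μ {ω | ¬ (graphOf E ω).Connected}
      ≤ ∑ k ∈ Icc 1 (n / 2), ∑ S ∈ powersetCard k (univ : Finset V),
          μ {ω | ∀ i ∈ S, ∀ j ∉ S, E s(i, j) ω = false} :=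
        (measure_mono hsub).trans <| (measure_biUnion_finset_le _ _).trans <|
          sum_le_sum fun k _ => measure_biUnion_finset_le _ _
    _ = cutSum n (1 - q) := by
        refine sum_congr rfl fun k _ => ?_
        rw [sum_congr rfl fun S hS => by
          rw [measure_forall_edge_eq_false hE hind hq, (mem_powersetCard_univ.1 hS)]]
        rw [sum_const, card_powersetCard, card_univ, nsmul_eq_mul]

end RandomGraph

theorem Nat.choose_le_exp_one_mul_div_pow (n k : ℕ) : (n.choose k : ℝ) ≤ (exp 1 * n / k) ^ k := by
  rcases k.eq_zero_or_pos with rfl | hk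
  · simp
  have hk' : (0 : ℝ) < k := by exact_mod_cast hk
  have hfact : (k : ℝ) ^ k / exp k ≤ k.factorial := by
    rw [div_le_iff₀ (exp_pos _), mul_comm, ← div_le_iff₀ (by positivity)]
    exact Real.pow_div_factorial_le_exp (x := k) hk'.le k
  calc (n.choose k : ℝ) ≤ n ^ k / k.factorial := Nat.choose_le_pow_div k n
    _ ≤ n ^ k / (k ^ k / exp k) := by gcongr
    _ = (exp 1 * n / k) ^ k := by rw [div_pow, mul_pow, exp_one_pow]; field_simp

theorem choose_mul_one_sub_pow_le {n k : ℕ} (hkn : k ≤ n) {p : ℝ} (hp : p ≤ 1) :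
    (n.choose k : ℝ) * (1 - p) ^ (k * (n - k)) ≤ (exp 1 * n / k * exp (-(p * (n - k)))) ^ k := by
  have hpow : (1 - p) ^ (n - k) ≤ exp (-(p * (n - k))) := by
    calc (1 - p) ^ (n - k) ≤ exp (-p) ^ (n - k) :=
          pow_le_pow_left₀ (by linarith) (one_sub_le_exp_neg p) _
      _ = exp (-(p * (n - k))) := by rw [← exp_nat_mul, Nat.cast_sub hkn]; ring_nf
  rw [mul_pow, mul_comm k, pow_mul]
  exact mul_le_mul (Nat.choose_le_exp_one_mul_div_pow n k)
    (pow_le_pow_left₀ (pow_nonneg (by linarith) _) hpow k) (by positivity) (by positivity)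

theorem rpow_neg_half_le_rpow_one_sub_add_inv {x : ℝ} (hx : 1 ≤ x) (a : ℝ) :
    x ^ (-(a / 2)) ≤ x ^ (1 - a) + x⁻¹ := by
  have hx0 : 0 ≤ x⁻¹ := by positivity
  have hxa : 0 ≤ x ^ (1 - a) := by positivity
  rcases le_total a 2 with ha | ha
  · linarith [rpow_le_rpow_of_exponent_le hx (show -(a / 2) ≤ 1 - a by linarith)]
  · have := rpow_le_rpow_of_exponent_le hx (show -(a / 2) ≤ -1 by linarith)
    rw [rpow_neg_one] at this
    linarith

theorem exp_one_mul_div_mul_exp_le {n : ℕ} {a p : ℝ} (hpn : p * n = a * log n)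
    (hp : p ≤ 1) {x : ℝ} (hx : x ∈ Set.Icc 1 ((n : ℝ) / 2)) :
    exp 1 * n / x * exp (-(p * (n - x))) ≤ exp 2 * ((n : ℝ) ^ (1 - a) + (n : ℝ)⁻¹) := by
  have hx0 : 0 < x := one_pos.trans_le hx.1
  have hn1 : (1 : ℝ) ≤ n := by linarith [hx.1.trans hx.2]
  have hn0 : (0 : ℝ) < n := one_pos.trans_le hn1
  have hconvex : ConvexOn ℝ (Set.Ioi 0) fun y => p * y - log y :=
    ((LinearMap.mulLeft ℝ p).convexOn (convex_Ioi 0)).add strictConcaveOn_log_Ioi.concaveOn.neg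
  have hmax := hconvex.le_max_of_mem_Icc (Set.mem_Ioi.2 one_pos)
    (Set.mem_Ioi.2 (by positivity)) hx
  have hlog : exp 1 * n / x * exp (-(p * (n - x))) = exp (1 + log n - p * n + (p * x - log x)) := by
    rw [add_sub_assoc, exp_add, exp_add, exp_sub, exp_sub, exp_log hn0, exp_log hx0,
      show -(p * (n - x)) = p * x - p * n by ring, exp_sub]
    ring
  have h2e : 2 * exp 1 ≤ exp 2 := by
    rw [show (2 : ℝ) = 1 + 1 by norm_num, exp_add]
    nlinarith [add_one_le_exp (1 : ℝ), exp_pos 1]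
  rw [hlog]
  rcases le_max_iff.1 hmax with h | h
  · calc exp (1 + log n - p * n + (p * x - log x)) ≤ exp (2 + (1 - a) * log n) := by
          simp only [log_one, mul_one, sub_zero] at h
          exact exp_le_exp.2 (by linarith)
      _ = exp 2 * (n : ℝ) ^ (1 - a) := by rw [exp_add, rpow_def_of_pos hn0, mul_comm (1 - a)]
      _ ≤ exp 2 * ((n : ℝ) ^ (1 - a) + (n : ℝ)⁻¹) := by
          gcongr
          exact le_add_of_nonneg_right (by positivity)
  · calc exp (1 + log n - p * n + (p * x - log x)) ≤ exp (1 + log 2 + -(a / 2) * log n) := by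
          rw [log_div hn0.ne' two_ne_zero] at h
          exact exp_le_exp.2 (by linarith)
      _ = 2 * exp 1 * (n : ℝ) ^ (-(a / 2)) := by
          rw [exp_add, exp_add, exp_log two_pos, rpow_def_of_pos hn0, mul_comm (-(a / 2))]; ring
      _ ≤ exp 2 * ((n : ℝ) ^ (1 - a) + (n : ℝ)⁻¹) := by
          gcongr
          exact rpow_neg_half_le_rpow_one_sub_add_inv hn1 a

theorem sum_Icc_one_pow_le_two_mul {r : ℝ} (hr0 : 0 ≤ r) (hr : r ≤ 1 / 2) (K : ℕ) :
    ∑ k ∈ Icc 1 K, r ^ k ≤ 2 * r := by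
  rw [← Ico_add_one_right_eq_Icc]
  refine (geom_sum_Ico_le_of_lt_one hr0 (by linarith)).trans ?_
  rw [pow_one, div_le_iff₀ (by linarith)]
  nlinarith

theorem cutSum_one_sub_le {n : ℕ} {a p : ℝ} (hpn : p * n = a * log n) (hp : p ≤ 1)
    (hsmall : exp 2 * ((n : ℝ) ^ (1 - a) + (n : ℝ)⁻¹) ≤ 1 / 2) :
    cutSum n (1 - p) ≤ 2 * (exp 2 * ((n : ℝ) ^ (1 - a) + (n : ℝ)⁻¹)) := by
  refine le_trans (sum_le_sum fun k hk => ?_) (sum_Icc_one_pow_le_two_mul (by positivity) hsmall _)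
  obtain ⟨hk1, hkn⟩ := mem_Icc.1 hk
  have hk : (k : ℝ) ∈ Set.Icc 1 ((n : ℝ) / 2) := by
    refine ⟨by exact_mod_cast hk1, ?_⟩
    rw [le_div_iff₀ two_pos]
    exact_mod_cast (Nat.le_div_iff_mul_le two_pos).1 hkn
  refine (choose_mul_one_sub_pow_le (hkn.trans (Nat.div_le_self n 2)) hp).trans ?_
  exact pow_le_pow_left₀ (by positivity) (exp_one_mul_div_mul_exp_le hpn hp hk) k

theorem eventually_cutSum_one_sub_le {a : ℝ} (ha : 1 < a) :
    ∀ᶠ n : ℕ in atTop,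
      cutSum n (1 - a * log n / n) ≤ 2 * exp 2 * ((n : ℝ) ^ (1 - a) + (n : ℝ)⁻¹) := by
  have hε : Tendsto (fun n : ℕ => exp 2 * ((n : ℝ) ^ (1 - a) + (n : ℝ)⁻¹)) atTop (nhds 0) := by
    have hpow := (tendsto_rpow_neg_atTop (show 0 < a - 1 by linarith)).comp
      tendsto_natCast_atTop_atTop
    simpa [Function.comp_def] using
      (hpow.add (tendsto_inv_atTop_zero.comp tendsto_natCast_atTop_atTop)).const_mul (exp 2)
  have hp : Tendsto (fun n : ℕ => a * log n / n) atTop (nhds 0) := by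
    simpa [mul_div_assoc] using ((isLittleO_log_id_atTop.tendsto_div_nhds_zero).comp
      tendsto_natCast_atTop_atTop).const_mul a
  filter_upwards [eventually_gt_atTop 0, hε.eventually_le_const (by norm_num : (0 : ℝ) < 1 / 2),
    hp.eventually_le_const one_pos] with n hn hsmall hp1
  rw [mul_assoc]
  exact cutSum_one_sub_le (by field_simp) hp1 hsmall

theorem one_le_mul_rpow_add_inv {n N : ℕ} (hn : 0 < n) (hnN : n < N) (a : ℝ) :
    1 ≤ N * ((n : ℝ) ^ (1 - a) + (n : ℝ)⁻¹) := by
  calc (1 : ℝ) ≤ N * (n : ℝ)⁻¹ := by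
        rw [← div_eq_mul_inv, one_le_div (by positivity)]
        exact_mod_cast hnN.le
    _ ≤ N * ((n : ℝ) ^ (1 - a) + (n : ℝ)⁻¹) := by
        gcongr
        exact le_add_of_nonneg_left (by positivity)

theorem mul_add_le_div_log_two_pow_mul {n : ℕ} (hn : 2 ≤ n) (m : ℕ) {C x y z : ℝ} (hC : 0 ≤ C)
    (hx : 0 ≤ x) (hy : 0 ≤ y) (hz : 0 ≤ z) :
    C * (x + y) ≤ C / log 2 ^ m * (log n ^ m * x + y + z) := by
  have hlog2 : 0 < log 2 := log_pos one_lt_two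
  have hlogn : log 2 ^ m ≤ log n ^ m := by gcongr; exact_mod_cast hn
  have hlog1 : log 2 ^ m ≤ 1 := pow_le_one₀ hlog2.le (log_two_lt_d9.le.trans (by norm_num))
  rw [div_mul_eq_mul_div, le_div_iff₀ (by positivity)]
  have := mul_le_mul_of_nonneg_right hlogn hx
  have := mul_le_mul_of_nonneg_right hlog1 hy
  have := mul_nonneg hC hz
  nlinarith

/-- Connectivity of the Erdős–Rényi random graph `G(n, a log n / n)` for
`a > 1`: there are constants `M, L > 0` such that for all `n ≥ 2`,
`P(G(n, a log n / n)` is not connected `) ≤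
M [(log n)^13 n^{1-a} + n^{-1} + exp (-L (log n)^13 n²)]`. -/
theorem erdos_renyi_not_connected_bound (a : ℝ) (ha : 1 < a) :
    ∃ M L : ℝ, 0 < M ∧ 0 < L ∧
      ∀ n : ℕ, 2 ≤ n →
      ∀ (Ω : Type) [MeasurableSpace Ω] (μ : Measure Ω) [IsProbabilityMeasure μ]
        (E : Sym2 (Fin n) → Ω → Bool),
        (∀ e, Measurable (E e)) →
        iIndepFun E μ →
        (∀ i j : Fin n, i ≠ j →
          μ {ω | E s(i, j) ω = true} = ENNReal.ofReal (a * Real.log n / n)) →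
        μ {ω | ¬ (graphOf E ω).Connected} ≤
          ENNReal.ofReal (M * ((Real.log n) ^ 13 * (n : ℝ) ^ (1 - a) +
            (n : ℝ)⁻¹ + Real.exp (-L * (Real.log n) ^ 13 * (n : ℝ) ^ 2))) := by
  obtain ⟨N, hN⟩ := eventually_atTop.1 (eventually_cutSum_one_sub_le ha)
  set C := max (2 * exp 2) N
  refine ⟨C / log 2 ^ 13, 1, by positivity, one_pos, fun n hn Ω _ μ _ E hE hind hprob => ?_⟩
  have : Nonempty (Fin n) := ⟨⟨0, by omega⟩⟩
  have hp0 : 0 ≤ a * log n / n := by have := log_natCast_nonneg n; positivity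
  have hp1 : a * log n / n ≤ 1 := ENNReal.ofReal_le_one.1 <|
    hprob ⟨0, by omega⟩ ⟨1, by omega⟩ (by simp) ▸ prob_le_one
  have hbound : μ {ω | ¬ (graphOf E ω).Connected} ≤
      ENNReal.ofReal (C * ((n : ℝ) ^ (1 - a) + (n : ℝ)⁻¹)) := by
    rcases lt_or_ge n N with hnN | hnN
    · refine prob_le_one.trans (ENNReal.one_le_ofReal.2 ?_)
      exact (one_le_mul_rpow_add_inv (by omega) hnN a).trans (by gcongr; exact le_max_right _ _)
    · calc μ {ω | ¬ (graphOf E ω).Connected}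
          ≤ cutSum n (1 - ENNReal.ofReal (a * log n / n)) := by
            simpa using measure_not_connected_le_cutSum hE hind hprob
        _ = ENNReal.ofReal (cutSum n (1 - a * log n / n)) := (ENNReal.ofReal_cutSum n hp0 hp1).symm
        _ ≤ _ := ENNReal.ofReal_le_ofReal <| (hN n hnN).trans (by gcongr; exact le_max_left _ _)
  exact hbound.trans <| ENNReal.ofReal_le_ofReal <| mul_add_le_div_log_two_pow_mul hn 13
    (by positivity) (by positivity) (by positivity) (exp_pos _).le
end
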